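/- arXiv:2007.02001 — 8 statements merged into one kernel-verified Lean document; each statement's English description precedes it below -/
import Mathlib

section
/- Let C be a nonempty subset of a Banach space X and T : C → C a mapping satisfying condition (D_a). Then for all x, y in C, if ‖Tx − x‖ ≤ ‖Ty − y‖ then ‖x − Ty‖ ≤ 3‖Tx − x‖ + ‖x − y‖. -/
open Filter Topology

variable {X : Type*}

/-- The set `C(T, x, α)` from the definition of condition `(D_a)`. -/
def DaSet [NormedAddCommGroup X] [NormedSpace ℝ X]
    (C : Set X) (T : X → X) (x : X) (α : ℝ) : Set X :=
  {y ∈ C | ∃ p ∈ C, ∃ q ∈ C, ‖T p - p‖ ≤ ‖T x - x‖ ∧ ‖T q - q‖ ≤ ‖T x - x‖ ∧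
    y = (1 - α) • p + α • T q}

/-- `T` satisfies condition `(D_a)` on `C` with constant `a`. -/
def CondDa [NormedAddCommGroup X] [NormedSpace ℝ X]
    (C : Set X) (T : X → X) (a : ℝ) : Prop :=
  ∀ α ∈ Set.Icc a 1, ∀ x ∈ C, ∀ y ∈ DaSet C T x α, ‖T x - T y‖ ≤ ‖x - y‖

/-- Weak convergence of a sequence in a normed space. -/
def WeakConv [NormedAddCommGroup X] [NormedSpace ℝ X] (u : ℕ → X) (x : X) : Prop :=
  ∀ f : X →L[ℝ] ℝ, Tendsto (fun n => f (u n)) atTop (𝓝 (f x))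

/-- Opial's condition. -/
def OpialCond (X : Type*) [NormedAddCommGroup X] [NormedSpace ℝ X] : Prop :=
  ∀ (u : ℕ → X) (x : X), WeakConv u x → ∀ y, y ≠ x →
    liminf (fun n => ‖u n - x‖) atTop < liminf (fun n => ‖u n - y‖) atTop

theorem stmt0 [NormedAddCommGroup X] [NormedSpace ℝ X] [CompleteSpace X]
    {C : Set X} (hC : C.Nonempty) (hconv : Convex ℝ C)
    {T : X → X} (hT : Set.MapsTo T C C)
    {a : ℝ} (ha : a ∈ Set.Ioo (1/2 : ℝ) 1) (hDa : CondDa C T a) :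
    ∀ x ∈ C, ∀ y ∈ C, ‖T x - x‖ ≤ ‖T y - y‖ →
      ‖x - T y‖ ≤ 3 * ‖T x - x‖ + ‖x - y‖ := by
  intro x hx y hy hle
  have h1 : (1:ℝ) ∈ Set.Icc a 1 := ⟨ha.2.le, le_rfl⟩
  -- Tx ∈ DaSet C T x 1
  have hTx : T x ∈ DaSet C T x 1 :=
    ⟨hT hx, x, hx, x, hx, le_rfl, le_rfl, by simp⟩
  have h2 : ‖T x - T (T x)‖ ≤ ‖x - T x‖ := hDa 1 h1 x hx _ hTx
  -- Tx ∈ DaSet C T y 1 (since ‖Tx - x‖ ≤ ‖Ty - y‖)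
  have hTx' : T x ∈ DaSet C T y 1 :=
    ⟨hT hx, x, hx, x, hx, hle, hle, by simp⟩
  have h3 : ‖T y - T (T x)‖ ≤ ‖y - T x‖ := hDa 1 h1 y hy _ hTx'
  have t1 : ‖x - T y‖ ≤ ‖x - T x‖ + ‖T x - T (T x)‖ + ‖T (T x) - T y‖ := by
    simpa [dist_eq_norm] using dist_triangle4 x (T x) (T (T x)) (T y)
  have t2 : ‖T (T x) - T y‖ = ‖T y - T (T x)‖ := norm_sub_rev _ _
  have t3 : ‖y - T x‖ ≤ ‖y - x‖ + ‖x - T x‖ := by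
    simpa [dist_eq_norm] using dist_triangle y x (T x)
  have e1 : ‖x - T x‖ = ‖T x - x‖ := norm_sub_rev _ _
  have e2 : ‖T x - T (T x)‖ ≤ ‖T x - x‖ := by rw [← e1]; exact h2
  have e3 : ‖y - x‖ = ‖x - y‖ := norm_sub_rev _ _
  calc ‖x - T y‖ ≤ ‖x - T x‖ + ‖T x - T (T x)‖ + ‖T (T x) - T y‖ := t1
    _ = ‖x - T x‖ + ‖T x - T (T x)‖ + ‖T y - T (T x)‖ := by rw [t2]
    _ ≤ ‖T x - x‖ + ‖T x - x‖ + ‖y - T x‖ := by rw [e1]; gcongr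
    _ ≤ ‖T x - x‖ + ‖T x - x‖ + (‖x - y‖ + ‖T x - x‖) := by
        rw [← e3, ← e1]; gcongr
    _ = 3 * ‖T x - x‖ + ‖x - y‖ := by ring
end

section
/- Let C be a nonempty subset of a Banach space X and T : C → C a mapping satisfying condition (D_a) with a fixed point. Then T is quasinonexpansive: for every x ∈ C and every fixed point p of T, ‖Tx − p‖ ≤ ‖x − p‖. -/
open Filter Topology

variable {X : Type*}

theorem stmt1 [NormedAddCommGroup X] [NormedSpace ℝ X] [CompleteSpace X]
    {C : Set X} (hC : C.Nonempty) (hconv : Convex ℝ C)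
    {T : X → X} (hT : Set.MapsTo T C C)
    {a : ℝ} (ha : a ∈ Set.Ioo (1/2 : ℝ) 1) (hDa : CondDa C T a)
    {p : X} (hp : p ∈ C) (hfp : T p = p) :
    ∀ x ∈ C, ‖T x - p‖ ≤ ‖x - p‖ := by
  intro x hx
  have hmem : p ∈ DaSet C T x a := by
    refine ⟨hp, p, hp, p, hp, ?_, ?_, ?_⟩
    · simp [hfp]
    · simp [hfp]
    · rw [hfp, ← add_smul]; simp
  have := hDa a ⟨le_refl a, le_of_lt ha.2⟩ x hx p hmem
  rwa [hfp] at this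
end

section
/- Let X be a Banach space satisfying Opial's condition, C a nonempty subset of X, and T : C → C a mapping satisfying condition (D_a). If a sequence {x_n} in C converges weakly to z ∈ C and lim_{n→∞} ‖x_n − T x_n‖ = 0, then T z = z. -/
open Filter Topology

variable {X : Type*}

/-- A weakly convergent sequence is norm-bounded (Banach–Steinhaus). -/
lemma weakConv_bounded [NormedAddCommGroup X] [NormedSpace ℝ X]
    {u : ℕ → X} {z : X} (hw : WeakConv u z) : ∃ M : ℝ, ∀ n, ‖u n‖ ≤ M := by
  set g : ℕ → StrongDual ℝ X →L[ℝ] ℝ :=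
    fun n => NormedSpace.inclusionInDoubleDual ℝ X (u n) with hg
  have hpt : ∀ f : StrongDual ℝ X, ∃ M : ℝ, ∀ n, ‖g n f‖ ≤ M := by
    intro f
    obtain ⟨M, hM⟩ : ∃ M, ∀ n, |f (u n)| ≤ M := by
      have hb : Bornology.IsBounded (Set.range fun n => f (u n)) :=
        Metric.isBounded_range_of_tendsto _ (hw f)
      obtain ⟨M, hM⟩ := hb.subset_closedBall 0
      exact ⟨M, fun n => by simpa [Real.dist_eq] using hM ⟨n, rfl⟩⟩
    exact ⟨M, fun n => by simpa [hg] using hM n⟩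
  obtain ⟨M, hM⟩ := banach_steinhaus hpt
  refine ⟨M, fun n => ?_⟩
  have : ‖g n‖ = ‖u n‖ := (NormedSpace.inclusionInDoubleDualLi ℝ (E := X)).norm_map (u n)
  rw [← this]; exact hM n

theorem stmt2 [NormedAddCommGroup X] [NormedSpace ℝ X] [CompleteSpace X]
    (hOp : OpialCond X)
    {C : Set X} (hC : C.Nonempty)
    {T : X → X} (hT : Set.MapsTo T C C)
    {a : ℝ} (ha : a ∈ Set.Ioo (1/2 : ℝ) 1) (hDa : CondDa C T a)
    {x : ℕ → X} (hx : ∀ n, x n ∈ C) {z : X} (hz : z ∈ C)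
    (hw : WeakConv x z)
    (hlim : Tendsto (fun n => ‖x n - T (x n)‖) atTop (𝓝 0)) :
    T z = z := by
  by_contra hne
  -- the two key instances of condition (D_a) at α = 1
  have h1 : (1 : ℝ) ∈ Set.Icc a 1 := ⟨le_of_lt ha.2, le_refl 1⟩
  -- ‖T w - T (T w)‖ ≤ ‖w - T w‖ for w ∈ C
  have key1 : ∀ w ∈ C, ‖T w - T (T w)‖ ≤ ‖w - T w‖ := by
    intro w hwC
    refine hDa 1 h1 w hwC (T w) ⟨hT hwC, w, hwC, w, hwC, le_refl _, le_refl _, by simp⟩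
  -- if ‖T q - q‖ ≤ ‖T z - z‖ then ‖T z - T (T q)‖ ≤ ‖z - T q‖
  have key2 : ∀ q ∈ C, ‖T q - q‖ ≤ ‖T z - z‖ → ‖T z - T (T q)‖ ≤ ‖z - T q‖ := by
    intro q hqC hq
    refine hDa 1 h1 z hz (T q) ⟨hT hqC, q, hqC, q, hqC, hq, hq, by simp⟩
  have hd : 0 < ‖T z - z‖ := by
    simpa [sub_eq_zero] using hne
  -- eventually ‖x n - T z‖ ≤ 3 * ‖x n - T (x n)‖ + ‖x n - z‖
  have hev : ∀ᶠ n in atTop, ‖x n - T z‖ ≤ 3 * ‖x n - T (x n)‖ + ‖x n - z‖ := by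
    have hsmall : ∀ᶠ n in atTop, ‖x n - T (x n)‖ ≤ ‖T z - z‖ :=
      (hlim.eventually_le_const hd)
    filter_upwards [hsmall] with n hn
    have hqn : ‖T (x n) - x n‖ ≤ ‖T z - z‖ := by rwa [norm_sub_rev]
    have h2 := key2 (x n) (hx n) hqn
    have h1' := key1 (x n) (hx n)
    calc ‖x n - T z‖
        ≤ ‖x n - T (T (x n))‖ + ‖T (T (x n)) - T z‖ := norm_sub_le_norm_sub_add_norm_sub _ _ _
      _ ≤ (‖x n - T (x n)‖ + ‖T (x n) - T (T (x n))‖) + ‖T z - T (T (x n))‖ := by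
          gcongr
          · exact norm_sub_le_norm_sub_add_norm_sub _ _ _
          · rw [norm_sub_rev]
      _ ≤ (‖x n - T (x n)‖ + ‖x n - T (x n)‖) + ‖z - T (x n)‖ := by gcongr
      _ ≤ (‖x n - T (x n)‖ + ‖x n - T (x n)‖) + (‖z - x n‖ + ‖x n - T (x n)‖) := by
          gcongr; exact norm_sub_le_norm_sub_add_norm_sub _ _ _
      _ = 3 * ‖x n - T (x n)‖ + ‖x n - z‖ := by rw [norm_sub_rev z]; ring
  -- boundedness facts
  obtain ⟨M, hM⟩ := weakConv_bounded hw
  have hOpial := hOp x z hw (T z) hne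
  set L₁ := liminf (fun n => ‖x n - z‖) atTop with hL₁
  set L₂ := liminf (fun n => ‖x n - T z‖) atTop with hL₂
  -- show L₂ ≤ L₁ + δ for every δ > 0, contradiction with L₁ < L₂
  have hle : L₂ ≤ L₁ := by
    refine le_of_forall_pos_le_add fun δ hδ => ?_
    have hsmall : ∀ᶠ n in atTop, 3 * ‖x n - T (x n)‖ ≤ δ := by
      have : Tendsto (fun n => 3 * ‖x n - T (x n)‖) atTop (𝓝 0) := by
        simpa using hlim.const_mul 3
      exact this.eventually_le_const hδ
    have hev2 : ∀ᶠ n in atTop, ‖x n - T z‖ ≤ ‖x n - z‖ + δ := by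
      filter_upwards [hev, hsmall] with n h1 h2; linarith
    have hcobdd : IsCoboundedUnder (· ≥ ·) atTop (fun n => ‖x n - z‖ + δ) :=
      isCoboundedUnder_ge_of_le atTop (x := M + ‖z‖ + δ)
        (fun n => by have := hM n; have := norm_sub_le (x n) z; linarith)
    have hbdd : IsBoundedUnder (· ≥ ·) atTop (fun n => ‖x n - z‖ + δ) :=
      isBoundedUnder_of ⟨δ, fun n => by have := norm_nonneg (x n - z); simp only [ge_iff_le]; linarith⟩
    have hbdd0 : IsBoundedUnder (· ≥ ·) atTop (fun n : ℕ => ‖x n - T z‖) :=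
      isBoundedUnder_of ⟨0, fun n => by simp only [ge_iff_le]; exact norm_nonneg _⟩
    have hcobdd0 : IsCoboundedUnder (· ≥ ·) atTop (fun n : ℕ => ‖x n - z‖) :=
      isCoboundedUnder_ge_of_le atTop (x := M + ‖z‖)
        (fun n => by have := hM n; have := norm_sub_le (x n) z; linarith)
    have hbdd1 : IsBoundedUnder (· ≥ ·) atTop (fun n : ℕ => ‖x n - z‖) :=
      isBoundedUnder_of ⟨0, fun n => by simp only [ge_iff_le]; exact norm_nonneg _⟩
    calc L₂ ≤ liminf (fun n => ‖x n - z‖ + δ) atTop :=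
          liminf_le_liminf hev2 hbdd0 hcobdd
      _ = L₁ + δ := liminf_add_const atTop _ δ hcobdd0 hbdd1
  exact absurd hOpial (not_lt.mpr hle)
end

section
/- Let X be a Banach space satisfying Opial's condition, C a nonempty weakly compact convex subset of X, and T : C → C a mapping satisfying condition (D_a). Then T has a fixed point in C. -/
open Filter Topology

variable {X : Type*}

/-!
Iterate `x (n + 1) = (1 - a) x n + a T (x n)` from a point of `C`. Each `x (n + 1)` lies in
`C(T, x n, a)`, so `(D_a)` makes `T` nonexpansive along the orbit; the Goebel–Kirk inequality then
forces `‖T (x n) - x n‖ → 0`, because `C` is bounded. A subsequence converges weakly to some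
`z ∈ C`. If `T z ≠ z`, then eventually `‖T (x n) - x n‖ ≤ ‖T z - z‖`, so `x (n + 1) ∈ C(T, z, a)`
and `‖T z - T (x n)‖ ≤ ‖z - x n‖`. Hence `liminf ‖x n - T z‖ ≤ liminf ‖x n - z‖` along the
subsequence, contradicting Opial's condition.

Weak sequential compactness of `C` comes from metrizability: on the closed span of a sequence,
which is separable, countably many functionals separate points.
-/

section WeakTopology

variable [NormedAddCommGroup X] [NormedSpace ℝ X]

theorem isBounded_of_isCompact_toWeakSpace_image {C : Set X}
    (hC : IsCompact (toWeakSpace ℝ X '' C)) : Bornology.IsBounded C := by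
  have hpointwise : ∀ f : StrongDual ℝ X, ∃ M, ∀ c : C,
      ‖NormedSpace.inclusionInDoubleDual ℝ X c f‖ ≤ M := fun f => by
    obtain ⟨M, hM⟩ := isBounded_iff_forall_norm_le.1
      (hC.image (WeakBilin.eval_continuous _ f)).isBounded
    exact ⟨M, fun c => hM _ ⟨_, ⟨c, c.2, rfl⟩, rfl⟩⟩
  obtain ⟨D, hD⟩ := banach_steinhaus hpointwise
  refine isBounded_iff_forall_norm_le.2 ⟨D, fun p hp => ?_⟩
  exact (NormedSpace.inclusionInDoubleDualLi ℝ (E := X)).norm_map p ▸ hD ⟨p, hp⟩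

theorem weakConv_of_tendsto_toWeakSpace {u : ℕ → X} {z : X}
    (h : Tendsto (fun n => toWeakSpace ℝ X (u n)) atTop (𝓝 (toWeakSpace ℝ X z))) :
    WeakConv u z :=
  fun f => ((WeakBilin.eval_continuous _ f).tendsto _).comp h

theorem isClosed_toWeakSpace_image {s : Set X} (hconv : Convex ℝ s) (hclosed : IsClosed s) :
    IsClosed (toWeakSpace ℝ X '' s) := by
  rw [← hclosed.closure_eq, hconv.toWeakSpace_closure ℝ]
  exact isClosed_closure

theorem TopologicalSpace.IsSeparable.exists_seq_strongDual_separating {S : Set X}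
    (hS : IsSeparable S) : ∃ f : ℕ → StrongDual ℝ X, ∀ v ∈ S, (∀ k, f k v = 0) → v = 0 := by
  obtain ⟨c, hc, hSc⟩ := hS
  obtain ⟨y, hy⟩ := (hc.insert 0).exists_eq_range (Set.insert_nonempty 0 c)
  have hSy : S ⊆ closure (Set.range y) := hSc.trans (closure_mono (hy ▸ Set.subset_insert 0 c))
  choose f hf_norm hf_apply using fun k => exists_dual_vector'' ℝ (y k)
  refine ⟨f, fun v hv hfv => norm_le_zero_iff.1 (le_of_forall_pos_le_add fun ε hε => ?_)⟩
  obtain ⟨_, ⟨k, rfl⟩, hk⟩ := Metric.mem_closure_iff.1 (hSy hv) (ε / 2) (half_pos hε)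
  rw [dist_eq_norm] at hk
  -- `f k` vanishes at `v` and attains its norm at `y k`
  have hyk : ‖y k‖ ≤ ‖v - y k‖ := by
    calc ‖y k‖ = f k (y k - v) := by simp [hf_apply, hfv]
      _ ≤ ‖f k‖ * ‖y k - v‖ := (le_abs_self _).trans ((f k).le_opNorm _)
      _ ≤ ‖v - y k‖ := by rw [norm_sub_rev]; exact mul_le_of_le_one_left (norm_nonneg _) (hf_norm k)
  calc ‖v‖ ≤ ‖v - y k‖ + ‖y k‖ := norm_le_norm_sub_add v (y k)
    _ ≤ 0 + ε := by linarith

theorem IsCompact.isSeqCompact_of_separating {α : Type*} [TopologicalSpace α] {K : Set α}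
    (hK : IsCompact K) {g : ℕ → α → ℝ} (hg : ∀ k, Continuous (g k))
    (hsep : ∀ v ∈ K, ∀ w ∈ K, (∀ k, g k v = g k w) → v = w) : IsSeqCompact K := by
  have : CompactSpace K := isCompact_iff_compactSpace.1 hK
  have : TopologicalSpace.MetrizableSpace K :=
    Metric.PiNatEmbed.TopologicalSpace.MetrizableSpace.of_countable_separating
      (fun k (v : K) => g k v) (fun k => (hg k).comp continuous_subtype_val)
      fun v w hvw => not_forall.1 fun h => hvw (Subtype.ext (hsep v v.2 w w.2 h))
  have hval : SeqContinuous ((↑) : K → α) := continuous_subtype_val.seqContinuous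
  simpa using IsSeqCompact.range hval

theorem exists_subseq_weakConv_of_isCompact {C : Set X}
    (hC : IsCompact (toWeakSpace ℝ X '' C)) {u : ℕ → X} (hu : ∀ n, u n ∈ C) :
    ∃ z ∈ C, ∃ φ : ℕ → ℕ, StrictMono φ ∧ WeakConv (fun j => u (φ j)) z := by
  set S : Submodule ℝ X := (Submodule.span ℝ (Set.range u)).topologicalClosure
  have huS : ∀ n, u n ∈ S :=
    fun n => Submodule.le_topologicalClosure _ (Submodule.subset_span ⟨n, rfl⟩)
  have hSsep : TopologicalSpace.IsSeparable (S : Set X) :=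
    (Set.countable_range u).isSeparable.span.closure
  obtain ⟨f, hf⟩ := hSsep.exists_seq_strongDual_separating
  have hK : IsCompact (toWeakSpace ℝ X '' (C ∩ S)) := by
    rw [Set.image_inter (toWeakSpace ℝ X).injective]
    exact hC.inter_right (isClosed_toWeakSpace_image S.convex
      (Submodule.isClosed_topologicalClosure _))
  have hKseq := hK.isSeqCompact_of_separating
    (g := fun k v => f k ((toWeakSpace ℝ X).symm v))
    (fun k => WeakBilin.eval_continuous _ (f k)) (by
      rintro _ ⟨v, ⟨-, hv⟩, rfl⟩ _ ⟨w, ⟨-, hw⟩, rfl⟩ hvw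
      have := hf (v - w) (S.sub_mem hv hw) fun k => by simpa [sub_eq_zero] using hvw k
      rw [sub_eq_zero.1 this])
  obtain ⟨_, ⟨z, ⟨hzC, -⟩, rfl⟩, φ, hφ, hlim⟩ :=
    hKseq fun n => ⟨u n, ⟨hu n, huS n⟩, rfl⟩
  exact ⟨z, hzC, φ, hφ, weakConv_of_tendsto_toWeakSpace hlim⟩

end WeakTopology

theorem eq_of_opialCond [NormedAddCommGroup X] [NormedSpace ℝ X] (hOp : OpialCond X)
    {u : ℕ → X} {z w : X} (hu : WeakConv u z)
    (hbdd : IsBoundedUnder (· ≤ ·) atTop fun n => ‖u n - z‖) {e : ℕ → ℝ}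
    (he : Tendsto e atTop (𝓝 0)) (hw : ∀ᶠ n in atTop, ‖u n - w‖ ≤ e n + ‖u n - z‖) : w = z := by
  by_contra hne
  have hbdd' : IsBoundedUnder (· ≤ ·) atTop (e + fun n => ‖u n - z‖) :=
    isBoundedUnder_le_add he.isBoundedUnder_le hbdd
  refine (hOp u z hu w hne).not_ge ?_
  calc liminf (fun n => ‖u n - w‖) atTop
      ≤ liminf (e + fun n => ‖u n - z‖) atTop := liminf_le_liminf hw
        (isBoundedUnder_of ⟨0, fun n => norm_nonneg _⟩) hbdd'.isCoboundedUnder_ge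
    _ ≤ limsup e atTop + liminf (fun n => ‖u n - z‖) atTop :=
        liminf_add_le he.isBoundedUnder_ge he.isBoundedUnder_le
          (isBoundedUnder_of ⟨0, fun n => norm_nonneg _⟩) hbdd.isCoboundedUnder_ge
    _ = liminf (fun n => ‖u n - z‖) atTop := by rw [he.limsup_eq, zero_add]

theorem one_sub_pow_mul_one_add_mul_le_one {a : ℝ} (ha₀ : -1 ≤ a) (ha₁ : a ≤ 1) (n : ℕ) :
    (1 - a) ^ n * (1 + n * a) ≤ 1 :=
  calc (1 - a) ^ n * (1 + n * a) ≤ (1 - a) ^ n * (1 + a) ^ n :=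
        mul_le_mul_of_nonneg_left (one_add_mul_le_pow (by linarith) n) (pow_nonneg (by linarith) n)
    _ = (1 - a ^ 2) ^ n := by rw [← mul_pow]; ring
    _ ≤ 1 := pow_le_one₀ (by nlinarith) (by nlinarith)

section Krasnoselskii

variable [NormedAddCommGroup X] [NormedSpace ℝ X]

/-- For `y = T ∘ x` this is the Krasnoselskii iteration of a map nonexpansive along its orbit. -/
structure IsKrasnoselskiiSeq (a : ℝ) (x y : ℕ → X) : Prop where
  succ_eq : ∀ n, x (n + 1) = (1 - a) • x n + a • y n
  norm_sub_succ_le : ∀ n, ‖y (n + 1) - y n‖ ≤ ‖x (n + 1) - x n‖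

namespace IsKrasnoselskiiSeq

variable {a : ℝ} {x y : ℕ → X}

theorem norm_succ_sub (h : IsKrasnoselskiiSeq a x y) (ha : 0 ≤ a) (n : ℕ) :
    ‖x (n + 1) - x n‖ = a * ‖y n - x n‖ := by
  rw [h.succ_eq, show (1 - a) • x n + a • y n - x n = a • (y n - x n) by module, norm_smul,
    Real.norm_of_nonneg ha]

theorem antitone_norm_sub (h : IsKrasnoselskiiSeq a x y) (ha₀ : 0 ≤ a) (ha₁ : a ≤ 1) :
    Antitone fun n => ‖y n - x n‖ := by
  refine antitone_nat_of_succ_le fun n => ?_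
  calc ‖y (n + 1) - x (n + 1)‖ = ‖(y (n + 1) - y n) + (1 - a) • (y n - x n)‖ := by
        rw [h.succ_eq]; congr 1; module
    _ ≤ ‖y (n + 1) - y n‖ + (1 - a) * ‖y n - x n‖ := by
        grw [norm_add_le, norm_smul, Real.norm_of_nonneg (sub_nonneg.2 ha₁)]
    _ ≤ a * ‖y n - x n‖ + (1 - a) * ‖y n - x n‖ := by
        grw [h.norm_sub_succ_le, h.norm_succ_sub ha₀]
    _ = ‖y n - x n‖ := by ring

theorem norm_add_sub_le (h : IsKrasnoselskiiSeq a x y) (ha₀ : 0 ≤ a) (ha₁ : a ≤ 1) (i m : ℕ) :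
    ‖y (i + m) - y i‖ ≤ m * a * ‖y i - x i‖ := by
  induction m with
  | zero => simp
  | succ m ih =>
    calc ‖y (i + (m + 1)) - y i‖ ≤ ‖y (i + m + 1) - y (i + m)‖ + ‖y (i + m) - y i‖ :=
          norm_sub_le_norm_sub_add_norm_sub _ _ _
      _ ≤ a * ‖y i - x i‖ + m * a * ‖y i - x i‖ := by
          have hdi : ‖y (i + m) - x (i + m)‖ ≤ ‖y i - x i‖ :=
            h.antitone_norm_sub ha₀ ha₁ (Nat.le_add_right i m)
          grw [ih, h.norm_sub_succ_le, h.norm_succ_sub ha₀, hdi]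
      _ = (m + 1 : ℕ) * a * ‖y i - x i‖ := by push_cast; ring

/-- The Goebel–Kirk inequality, multiplied through by `(1 - a) ^ n`. -/
theorem goebelKirk (h : IsKrasnoselskiiSeq a x y) (ha₀ : 0 ≤ a) (ha₁ : a ≤ 1) (n : ℕ) :
    ∀ i, ((1 - a) ^ n * (1 + n * a) - 1) * ‖y i - x i‖ + ‖y (i + n) - x (i + n)‖ ≤
      (1 - a) ^ n * ‖y (i + n) - x i‖ := by
  have hanti := h.antitone_norm_sub ha₀ ha₁
  induction n with
  | zero => simp
  | succ n ih =>
    intro i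
    have hc : 0 ≤ (1 - a) ^ n := pow_nonneg (by linarith) n
    have hstep : ‖y (i + n + 1) - x (i + 1)‖ ≤
        (1 - a) * ‖y (i + n + 1) - x i‖ + (n + 1) * a ^ 2 * ‖y i - x i‖ := by
      calc ‖y (i + n + 1) - x (i + 1)‖
          = ‖(1 - a) • (y (i + n + 1) - x i) + a • (y (i + (n + 1)) - y i)‖ := by
            rw [h.succ_eq]; congr 1; module
        _ ≤ (1 - a) * ‖y (i + n + 1) - x i‖ + a * ((n + 1 : ℕ) * a * ‖y i - x i‖) := by
            grw [norm_add_le, norm_smul, norm_smul, Real.norm_of_nonneg (sub_nonneg.2 ha₁),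
              Real.norm_of_nonneg ha₀, h.norm_add_sub_le ha₀ ha₁]
        _ = _ := by push_cast; ring
    have hd : ((1 - a) ^ n * (1 + n * a) - 1) * ‖y i - x i‖ ≤
        ((1 - a) ^ n * (1 + n * a) - 1) * ‖y (i + 1) - x (i + 1)‖ :=
      mul_le_mul_of_nonpos_left (hanti (Nat.le_succ i))
        (by linarith [one_sub_pow_mul_one_add_mul_le_one (by linarith) ha₁ n])
    have ih' := ih (i + 1)
    rw [show i + 1 + n = i + n + 1 by omega] at ih'
    rw [← add_assoc, pow_succ]
    push_cast
    linear_combination mul_le_mul_of_nonneg_left hstep hc + ih' + hd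

theorem tendsto_norm_sub (h : IsKrasnoselskiiSeq a x y) (ha₀ : 0 < a) (ha₁ : a < 1) {D : ℝ}
    (hD : ∀ i j, ‖y j - x i‖ ≤ D) : Tendsto (fun n => ‖y n - x n‖) atTop (𝓝 0) := by
  set d := fun n => ‖y n - x n‖
  have hanti : Antitone d := h.antitone_norm_sub ha₀.le ha₁.le
  have hbdd : BddBelow (Set.range d) := ⟨0, by rintro _ ⟨n, rfl⟩; exact norm_nonneg _⟩
  have hlim := tendsto_atTop_ciInf hanti hbdd
  set L := ⨅ n, d n
  -- let `i → ∞` in the Goebel–Kirk inequality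
  have hL : ∀ n : ℕ, (1 + n * a) * L ≤ D := fun n => by
    have hc : 0 < (1 - a) ^ n := pow_pos (by linarith) n
    have hle := le_of_tendsto_of_tendsto'
      ((hlim.const_mul _).add (hlim.comp (tendsto_add_atTop_nat n)))
      (tendsto_const_nhds (x := (1 - a) ^ n * D))
      fun i => (h.goebelKirk ha₀.le ha₁.le n i).trans
        (mul_le_mul_of_nonneg_left (hD i (i + n)) hc.le)
    nlinarith
  have hL0 : L ≤ 0 := by
    by_contra! hpos
    obtain ⟨n, hn⟩ := exists_nat_gt (D / (a * L))
    have := (div_lt_iff₀ (by positivity)).1 hn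
    nlinarith [hL n]
  rwa [le_antisymm hL0 (le_ciInf fun n => norm_nonneg _)] at hlim

end IsKrasnoselskiiSeq

end Krasnoselskii

section FixedPoint

variable [NormedAddCommGroup X] [NormedSpace ℝ X]

noncomputable def krasnoselskiiIter (T : X → X) (a : ℝ) (x₀ : X) : ℕ → X
  | 0 => x₀
  | n + 1 => (1 - a) • krasnoselskiiIter T a x₀ n + a • T (krasnoselskiiIter T a x₀ n)

variable {C : Set X} {T : X → X} {a : ℝ} {x₀ : X}

theorem krasnoselskiiIter_mem (hconv : Convex ℝ C) (hT : Set.MapsTo T C C) (ha₀ : 0 ≤ a)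
    (ha₁ : a ≤ 1) (hx₀ : x₀ ∈ C) (n : ℕ) : krasnoselskiiIter T a x₀ n ∈ C := by
  induction n with
  | zero => exact hx₀
  | succ n ih => exact hconv ih (hT ih) (by linarith) ha₀ (by ring)

theorem krasnoselskiiIter_succ_mem_daSet (hmem : ∀ n, krasnoselskiiIter T a x₀ n ∈ C) {z : X}
    {n : ℕ} (hn : ‖T (krasnoselskiiIter T a x₀ n) - krasnoselskiiIter T a x₀ n‖ ≤ ‖T z - z‖) :
    krasnoselskiiIter T a x₀ (n + 1) ∈ DaSet C T z a :=
  ⟨hmem (n + 1), _, hmem n, _, hmem n, hn, hn, rfl⟩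

theorem isKrasnoselskiiSeq_krasnoselskiiIter (ha : a ≤ 1) (hDa : CondDa C T a)
    (hmem : ∀ n, krasnoselskiiIter T a x₀ n ∈ C) :
    IsKrasnoselskiiSeq a (krasnoselskiiIter T a x₀) (T ∘ krasnoselskiiIter T a x₀) where
  succ_eq _ := rfl
  norm_sub_succ_le n := by
    simp only [Function.comp_apply]
    rw [norm_sub_rev, norm_sub_rev (krasnoselskiiIter T a x₀ _)]
    exact hDa a ⟨le_rfl, ha⟩ _ (hmem n) _ (krasnoselskiiIter_succ_mem_daSet hmem le_rfl)

theorem tendsto_norm_apply_krasnoselskiiIter_sub (hbdd : Bornology.IsBounded C)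
    (hT : Set.MapsTo T C C) (ha : a ∈ Set.Ioo (0 : ℝ) 1) (hDa : CondDa C T a)
    (hmem : ∀ n, krasnoselskiiIter T a x₀ n ∈ C) :
    Tendsto (fun n => ‖T (krasnoselskiiIter T a x₀ n) - krasnoselskiiIter T a x₀ n‖) atTop
      (𝓝 0) := by
  obtain ⟨D, hD⟩ := Metric.isBounded_iff.1 hbdd
  exact (isKrasnoselskiiSeq_krasnoselskiiIter ha.2.le hDa hmem).tendsto_norm_sub ha.1 ha.2
    fun i j => (dist_eq_norm _ _).symm.trans_le (hD (hT (hmem j)) (hmem i))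

theorem eventually_norm_apply_sub_apply_krasnoselskiiIter_le (ha : a ≤ 1) (hDa : CondDa C T a)
    (hmem : ∀ n, krasnoselskiiIter T a x₀ n ∈ C)
    (hreg : Tendsto (fun n => ‖T (krasnoselskiiIter T a x₀ n) - krasnoselskiiIter T a x₀ n‖)
      atTop (𝓝 0))
    {z : X} (hz : z ∈ C) (hfix : T z ≠ z) :
    ∀ᶠ n in atTop, ‖T z - T (krasnoselskiiIter T a x₀ n)‖ ≤ ‖z - krasnoselskiiIter T a x₀ n‖ := by
  have hsmall : ∀ᶠ n in atTop,
      ‖T (krasnoselskiiIter T a x₀ (n - 1)) - krasnoselskiiIter T a x₀ (n - 1)‖ ≤ ‖T z - z‖ :=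
    (tendsto_sub_atTop_nat 1).eventually <|
      hreg.eventually_le_const (norm_pos_iff.2 (sub_ne_zero.2 hfix))
  filter_upwards [hsmall, eventually_ge_atTop 1] with n hn hn1
  obtain ⟨m, rfl⟩ := Nat.exists_eq_add_of_le' hn1
  exact hDa a ⟨le_rfl, ha⟩ z hz _ (krasnoselskiiIter_succ_mem_daSet hmem hn)

end FixedPoint

theorem stmt3_general [NormedAddCommGroup X] [NormedSpace ℝ X]
    (hOp : OpialCond X)
    {C : Set X} (hC : C.Nonempty) (hconv : Convex ℝ C)
    (hcomp : IsCompact ((toWeakSpace ℝ X) '' C))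
    {T : X → X} (hT : Set.MapsTo T C C)
    {a : ℝ} (ha : a ∈ Set.Ioo (1/2 : ℝ) 1) (hDa : CondDa C T a) :
    ∃ p ∈ C, T p = p := by
  obtain ⟨x₀, hx₀⟩ := hC
  have ha' : a ∈ Set.Ioo (0 : ℝ) 1 := ⟨by linarith [ha.1], ha.2⟩
  have hbdd := isBounded_of_isCompact_toWeakSpace_image hcomp
  set x := krasnoselskiiIter T a x₀
  have hxC := krasnoselskiiIter_mem hconv hT ha'.1.le ha'.2.le hx₀
  have hreg := tendsto_norm_apply_krasnoselskiiIter_sub hbdd hT ha' hDa hxC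
  obtain ⟨z, hzC, φ, hφ, hxz⟩ := exists_subseq_weakConv_of_isCompact hcomp hxC
  refine ⟨z, hzC, by_contra fun hfix => hfix (eq_of_opialCond hOp hxz ?_
    (hreg.comp hφ.tendsto_atTop) ?_)⟩
  · obtain ⟨D, hD⟩ := Metric.isBounded_iff.1 hbdd
    exact isBoundedUnder_of ⟨D, fun j => (dist_eq_norm _ _).symm.trans_le (hD (hxC _) hzC)⟩
  · have hTz := eventually_norm_apply_sub_apply_krasnoselskiiIter_le ha.2.le hDa hxC hreg hzC hfix
    filter_upwards [hφ.tendsto_atTop.eventually hTz] with j hj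
    calc ‖x (φ j) - T z‖ ≤ ‖x (φ j) - T (x (φ j))‖ + ‖T (x (φ j)) - T z‖ :=
          norm_sub_le_norm_sub_add_norm_sub _ _ _
      _ ≤ ‖T (x (φ j)) - x (φ j)‖ + ‖x (φ j) - z‖ := by
          rw [norm_sub_rev (x _), norm_sub_rev (T (x _)) (T z), norm_sub_rev (x _) z]
          gcongr

theorem stmt3 [NormedAddCommGroup X] [NormedSpace ℝ X] [CompleteSpace X]
    (hOp : OpialCond X)
    {C : Set X} (hC : C.Nonempty) (hconv : Convex ℝ C)
    (hcomp : IsCompact ((toWeakSpace ℝ X) '' C))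
    {T : X → X} (hT : Set.MapsTo T C C)
    {a : ℝ} (ha : a ∈ Set.Ioo (1/2 : ℝ) 1) (hDa : CondDa C T a) :
    ∃ p ∈ C, T p = p :=
  stmt3_general hOp hC hconv hcomp hT ha hDa
end

section
/- Let C be a nonempty convex subset of a Banach space X and T : C → C a mapping satisfying condition (D_a) with a fixed point p ∈ C. Let {x_n} be generated by: x_1 ∈ C, z_n = (1 − c_n)x_n + c_n T x_n, y_n = (1 − b_n)z_n + b_n T z_n, x_{n+1} = (1 − a_n)T z_n + a_n T y_n, with a_n, b_n, c_n ∈ (0,1). Then lim_{n→∞} ‖x_n − p‖ exists (the sequence {‖x_n − p‖} is convergent). -/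
open Filter Topology

variable {X : Type*}

lemma comb_norm_le [NormedAddCommGroup X] [NormedSpace ℝ X]
    {u v p : X} {t A : ℝ} (ht0 : 0 ≤ t) (ht1 : t ≤ 1)
    (hu : ‖u - p‖ ≤ A) (hv : ‖v - p‖ ≤ A) :
    ‖(1 - t) • u + t • v - p‖ ≤ A := by
  have h : (1 - t) • u + t • v - p = (1 - t) • (u - p) + t • (v - p) := by
    simp [smul_sub, sub_smul]; abel
  rw [h]
  calc ‖(1 - t) • (u - p) + t • (v - p)‖
      ≤ ‖(1 - t) • (u - p)‖ + ‖t • (v - p)‖ := norm_add_le _ _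
    _ = (1 - t) * ‖u - p‖ + t * ‖v - p‖ := by
        rw [norm_smul, norm_smul, Real.norm_of_nonneg (by linarith),
          Real.norm_of_nonneg ht0]
    _ ≤ (1 - t) * A + t * A := by
        have h1 : (0:ℝ) ≤ 1 - t := by linarith
        gcongr
    _ = A := by ring

theorem stmt5 [NormedAddCommGroup X] [NormedSpace ℝ X] [CompleteSpace X]
    {C : Set X} (hC : C.Nonempty) (hconv : Convex ℝ C)
    {T : X → X} (hT : Set.MapsTo T C C)
    {a : ℝ} (ha : a ∈ Set.Ioo (1/2 : ℝ) 1) (hDa : CondDa C T a)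
    {p : X} (hp : p ∈ C) (hfp : T p = p)
    {an bn cn : ℕ → ℝ} (han : ∀ n, an n ∈ Set.Ioo (0:ℝ) 1)
    (hbn : ∀ n, bn n ∈ Set.Ioo (0:ℝ) 1) (hcn : ∀ n, cn n ∈ Set.Ioo (0:ℝ) 1)
    {x y z : ℕ → X} (hx0 : x 0 ∈ C)
    (hz : ∀ n, z n = (1 - cn n) • x n + cn n • T (x n))
    (hy : ∀ n, y n = (1 - bn n) • z n + bn n • T (z n))
    (hxs : ∀ n, x (n + 1) = (1 - an n) • T (z n) + an n • T (y n)) :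
    ∃ L : ℝ, Tendsto (fun n => ‖x n - p‖) atTop (𝓝 L) := by
  -- quasinonexpansiveness
  have hq : ∀ w ∈ C, ‖T w - p‖ ≤ ‖w - p‖ := by
    intro w hw
    have hpmem : p ∈ DaSet C T w a := by
      refine ⟨hp, p, hp, p, hp, by simp [hfp], by simp [hfp], ?_⟩
      rw [hfp, ← add_smul]; simp
    have := hDa a ⟨le_refl a, ha.2.le⟩ w hw p hpmem
    rwa [hfp] at this
  -- membership
  have hmem : ∀ n, x n ∈ C := by
    intro n
    induction n with
    | zero => exact hx0
    | succ n ih =>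
      have hzC : z n ∈ C := by
        rw [hz n]
        exact hconv ih (hT ih) (by linarith [(hcn n).2]) (hcn n).1.le (by ring)
      have hyC : y n ∈ C := by
        rw [hy n]
        exact hconv hzC (hT hzC) (by linarith [(hbn n).2]) (hbn n).1.le (by ring)
      rw [hxs n]
      exact hconv (hT hzC) (hT hyC) (by linarith [(han n).2]) (han n).1.le (by ring)
  -- decreasing
  have hdec : ∀ n, ‖x (n + 1) - p‖ ≤ ‖x n - p‖ := by
    intro n
    have hxC := hmem n
    have hzC : z n ∈ C := by
      rw [hz n]
      exact hconv hxC (hT hxC) (by linarith [(hcn n).2]) (hcn n).1.le (by ring)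
    have hyC : y n ∈ C := by
      rw [hy n]
      exact hconv hzC (hT hzC) (by linarith [(hbn n).2]) (hbn n).1.le (by ring)
    have hzle : ‖z n - p‖ ≤ ‖x n - p‖ := by
      rw [hz n]
      exact comb_norm_le (hcn n).1.le (hcn n).2.le le_rfl (hq _ hxC)
    have hyle : ‖y n - p‖ ≤ ‖x n - p‖ := by
      rw [hy n]
      exact comb_norm_le (hbn n).1.le (hbn n).2.le hzle ((hq _ hzC).trans hzle)
    rw [hxs n]
    exact comb_norm_le (han n).1.le (han n).2.le ((hq _ hzC).trans hzle)
      ((hq _ hyC).trans hyle)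
  have hanti : Antitone fun n => ‖x n - p‖ := antitone_nat_of_succ_le hdec
  refine ⟨⨅ n, ‖x n - p‖, ?_⟩
  exact tendsto_atTop_ciInf hanti ⟨0, by rintro r ⟨n, rfl⟩; positivity⟩
end

section
/- Let X be a uniformly convex Banach space, C a nonempty closed convex subset, and T : C → C satisfying condition (D_a). Let {x_n} be a bounded sequence in C with lim_{n→∞} ‖x_n − T x_n‖ = 0, and suppose the asymptotic center A(C, {x_n}) of {x_n} relative to C is a singleton {p}. Then T p = p. -/
open Filter Topology

variable {X : Type*}

/-- Key lemma: if `‖Tu - u‖ ≤ ‖Tv - v‖` then `‖u - Tv‖ ≤ 3‖Tu - u‖ + ‖u - v‖`. -/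
lemma da_key [NormedAddCommGroup X] [NormedSpace ℝ X] {C : Set X} (hconv : Convex ℝ C)
    {T : X → X} (hT : Set.MapsTo T C C) {a : ℝ} (ha : a ∈ Set.Ioo (1/2 : ℝ) 1)
    (hDa : CondDa C T a) {u v : X} (hu : u ∈ C) (hv : v ∈ C)
    (h : ‖T u - u‖ ≤ ‖T v - v‖) : ‖u - T v‖ ≤ 3 * ‖T u - u‖ + ‖u - v‖ := by
  obtain ⟨ha1, ha2⟩ := ha
  have ha0 : (0:ℝ) ≤ a := by linarith
  have ha1' : (0:ℝ) ≤ 1 - a := by linarith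
  set w := (1 - a) • u + a • T u with hw
  have hwC : w ∈ C := hconv hu (hT hu) ha1' ha0 (by ring)
  have haIcc : a ∈ Set.Icc a 1 := ⟨le_refl a, ha2.le⟩
  have hmem_u : w ∈ DaSet C T u a := ⟨hwC, u, hu, u, hu, le_refl _, le_refl _, rfl⟩
  have hmem_v : w ∈ DaSet C T v a := ⟨hwC, u, hu, u, hu, h, h, rfl⟩
  have h1 : ‖T u - T w‖ ≤ ‖u - w‖ := hDa a haIcc u hu w hmem_u
  have h2 : ‖T v - T w‖ ≤ ‖v - w‖ := hDa a haIcc v hv w hmem_v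
  have huw : ‖u - w‖ = a * ‖T u - u‖ := by
    have : u - w = a • (u - T u) := by
      rw [hw]; module
    rw [this, norm_smul, Real.norm_of_nonneg ha0, norm_sub_rev]
  have hvw : ‖v - w‖ ≤ ‖u - v‖ + a * ‖T u - u‖ := by
    have t0 : ‖v - w‖ ≤ ‖v - u‖ + ‖u - w‖ := by
      simpa [dist_eq_norm] using dist_triangle v u w
    rw [huw] at t0; rw [norm_sub_rev v u] at t0; linarith
  have t1 : ‖u - T v‖ ≤ ‖u - T w‖ + ‖T w - T v‖ := by
    simpa [dist_eq_norm] using dist_triangle u (T w) (T v)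
  have t2 : ‖u - T w‖ ≤ ‖u - T u‖ + ‖T u - T w‖ := by
    simpa [dist_eq_norm] using dist_triangle u (T u) (T w)
  have e1 : ‖u - T u‖ = ‖T u - u‖ := norm_sub_rev _ _
  have e2 : ‖T w - T v‖ = ‖T v - T w‖ := norm_sub_rev _ _
  have hna : (0:ℝ) ≤ ‖T u - u‖ := norm_nonneg _
  nlinarith [hvw, huw, h1, h2, hna]

theorem stmt8 [NormedAddCommGroup X] [NormedSpace ℝ X] [UniformConvexSpace X]
    [CompleteSpace X]
    {C : Set X} (hC : C.Nonempty) (hcl : IsClosed C) (hconv : Convex ℝ C)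
    {T : X → X} (hT : Set.MapsTo T C C)
    {a : ℝ} (ha : a ∈ Set.Ioo (1/2 : ℝ) 1) (hDa : CondDa C T a)
    {x : ℕ → X} (hx : ∀ n, x n ∈ C) (hbdd : Bornology.IsBounded (Set.range x))
    (hlim : Tendsto (fun n => ‖x n - T (x n)‖) atTop (𝓝 0))
    {p : X}
    (hcenter : {z | z ∈ C ∧ limsup (fun n => ‖x n - z‖) atTop =
      sInf ((fun w => limsup (fun n => ‖x n - w‖) atTop) '' C)} = {p}) :
    T p = p := by
  by_contra hne
  -- p is in the asymptotic center set
  have hpmem : p ∈ {z | z ∈ C ∧ limsup (fun n => ‖x n - z‖) atTop =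
      sInf ((fun w => limsup (fun n => ‖x n - w‖) atTop) '' C)} := by
    rw [hcenter]; exact rfl
  obtain ⟨hpC, hpval⟩ := hpmem
  -- boundedness facts
  obtain ⟨M, hM⟩ := isBounded_iff_forall_norm_le.mp hbdd
  have hMn : ∀ n, ‖x n‖ ≤ M := fun n => hM _ ⟨n, rfl⟩
  have hbd : ∀ z : X, IsBoundedUnder (· ≤ ·) atTop (fun n => ‖x n - z‖) := by
    intro z
    refine isBoundedUnder_of ⟨M + ‖z‖, fun n => ?_⟩
    calc ‖x n - z‖ ≤ ‖x n‖ + ‖z‖ := norm_sub_le _ _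
      _ ≤ M + ‖z‖ := by linarith [hMn n]
  have hcb : ∀ z : X, IsCoboundedUnder (· ≤ ·) atTop (fun n => ‖x n - z‖) := by
    intro z
    refine IsBoundedUnder.isCoboundedUnder_le ?_
    exact isBoundedUnder_of ⟨0, fun n => norm_nonneg _⟩
  have h0 : ∀ z : X, 0 ≤ limsup (fun n => ‖x n - z‖) atTop := fun z =>
    le_limsup_of_frequently_le (Frequently.of_forall fun n => norm_nonneg _) (hbd z)
  have hSbdd : BddBelow ((fun w => limsup (fun n => ‖x n - w‖) atTop) '' C) := by
    refine ⟨0, ?_⟩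
    rintro r ⟨z, hz, rfl⟩
    exact h0 z
  -- T p ≠ p gives positive fixed-point residual
  have hpos : 0 < ‖T p - p‖ := by
    rw [norm_pos_iff]
    exact sub_ne_zero.mpr hne
  have hev : ∀ᶠ n in atTop, ‖T (x n) - x n‖ ≤ ‖T p - p‖ := by
    filter_upwards [hlim.eventually_lt_const hpos] with n hn
    rw [norm_sub_rev]; exact hn.le
  -- key estimate: limsup ‖x n - T p‖ ≤ limsup ‖x n - p‖
  have hle : limsup (fun n => ‖x n - T p‖) atTop ≤ limsup (fun n => ‖x n - p‖) atTop := by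
    refine le_of_forall_pos_le_add fun ε hε => ?_
    have hev2 : ∀ᶠ n in atTop, ‖x n - T (x n)‖ < ε / 6 := hlim.eventually_lt_const (by linarith)
    have hev3 : ∀ᶠ n in atTop,
        ‖x n - p‖ < limsup (fun n => ‖x n - p‖) atTop + ε / 2 := by
      refine eventually_lt_of_limsup_lt ?_ (hbd p)
      linarith
    refine limsup_le_of_le (hcb _) ?_
    filter_upwards [hev, hev2, hev3] with n h1 h2 h3
    have hkey := da_key hconv hT ha hDa (hx n) hpC h1
    have : ‖T (x n) - x n‖ < ε / 6 := by rw [norm_sub_rev]; exact h2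
    linarith
  -- hence T p is also an asymptotic center
  have hmemS : limsup (fun n => ‖x n - T p‖) atTop ∈
      (fun w => limsup (fun n => ‖x n - w‖) atTop) '' C := ⟨T p, hT hpC, rfl⟩
  have hge : sInf ((fun w => limsup (fun n => ‖x n - w‖) atTop) '' C) ≤
      limsup (fun n => ‖x n - T p‖) atTop := csInf_le hSbdd hmemS
  have heq : limsup (fun n => ‖x n - T p‖) atTop =
      sInf ((fun w => limsup (fun n => ‖x n - w‖) atTop) '' C) := by
    rw [hpval] at hle
    exact le_antisymm hle hge
  have : T p ∈ ({p} : Set X) := by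
    rw [← hcenter]
    exact ⟨hT hpC, heq⟩
  exact hne this
end

section
/- Define T : [0, 1] → [0, 1] by T(x) = x/2 for x ≠ 1 and T(1) = 5/8. Then T satisfies condition (D_a) with a = 2/3: for all α ∈ [2/3, 1], all x ∈ [0,1], and all y ∈ C(T, x, α), one has |T x − T y| ≤ |x − y|. -/
noncomputable def Tex : ℝ → ℝ := fun x => if x = 1 then 5/8 else x / 2

theorem stmt15 :
    ∀ α ∈ Set.Icc (2/3 : ℝ) 1, ∀ x ∈ Set.Icc (0:ℝ) 1, ∀ y ∈ Set.Icc (0:ℝ) 1,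
      (∃ p ∈ Set.Icc (0:ℝ) 1, ∃ q ∈ Set.Icc (0:ℝ) 1,
        |Tex p - p| ≤ |Tex x - x| ∧ |Tex q - q| ≤ |Tex x - x| ∧
        y = (1 - α) * p + α * Tex q) →
      |Tex x - Tex y| ≤ |x - y| := by
  rintro α ⟨hα1, hα2⟩ x hx y hy ⟨p, hp, q, hq, _, _, hyeq⟩
  have hTq : Tex q ≤ 5/8 := by
    unfold Tex
    split <;> linarith [hq.2]
  have hy34 : y ≤ 3/4 := by
    rw [hyeq]
    nlinarith [mul_nonneg (by linarith : (0:ℝ) ≤ 1 - α) (by linarith [hp.2] : (0:ℝ) ≤ 1 - p),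
      mul_nonneg (by linarith : (0:ℝ) ≤ α) (by linarith : (0:ℝ) ≤ 5/8 - Tex q)]
  have hTy : Tex y = y / 2 := by
    unfold Tex
    rw [if_neg (by intro h; rw [h] at hy34; linarith)]
  by_cases hx1 : x = 1
  · subst hx1
    have hTx : Tex 1 = 5/8 := by unfold Tex; simp
    rw [hTx, hTy]
    have h1 : |(1:ℝ) - y| = 1 - y := abs_of_nonneg (by linarith)
    rw [h1, abs_le]
    constructor <;> linarith [hy.1]
  · have hTx : Tex x = x / 2 := by unfold Tex; rw [if_neg hx1]
    rw [hTx, hTy]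
    have : x / 2 - y / 2 = (x - y) / 2 := by ring
    rw [this, abs_div]
    have := abs_nonneg (x - y)
    simp only [abs_of_nonneg (by norm_num : (0:ℝ) ≤ 2)] <;> linarith
end

section
/- Let C be a nonempty convex subset of a Banach space X and T : C → C a mapping satisfying condition (D_a). Then the fixed point set F(T) of T is closed; moreover, if X is strictly convex, F(T) is convex. -/
open Filter Topology

variable {X : Type*}

theorem stmt19 [NormedAddCommGroup X] [NormedSpace ℝ X] [CompleteSpace X]
    {C : Set X} (hC : C.Nonempty) (hconv : Convex ℝ C)
    {T : X → X} (hT : Set.MapsTo T C C)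
    {a : ℝ} (ha : a ∈ Set.Ioo (1/2 : ℝ) 1) (hDa : CondDa C T a)
    (hFne : {p ∈ C | T p = p}.Nonempty) :
    (closure {p ∈ C | T p = p} ∩ C ⊆ {p ∈ C | T p = p}) ∧
    (StrictConvexSpace ℝ X → Convex ℝ {p ∈ C | T p = p}) := by
  have quasi : ∀ x ∈ C, ∀ p ∈ C, T p = p → ‖T x - p‖ ≤ ‖x - p‖ := by
    intro x hx p hp hTp
    have hmem : p ∈ {y ∈ C | ∃ p' ∈ C, ∃ q' ∈ C, ‖T p' - p'‖ ≤ ‖T x - x‖ ∧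
        ‖T q' - q'‖ ≤ ‖T x - x‖ ∧ p = (1 - a) • p' + a • T q'} := by
      refine ⟨hp, p, hp, p, hp, by simp [hTp], by simp [hTp], ?_⟩
      rw [hTp, ← add_smul]; simp
    have := hDa a ⟨le_refl a, ha.2.le⟩ x hx p hmem
    rwa [hTp] at this
  constructor
  · rintro x ⟨hxc, hxC⟩
    refine ⟨hxC, ?_⟩
    have key : ‖T x - x‖ ≤ 0 := by
      refine le_of_forall_pos_le_add ?_
      intro ε hε
      rcases Metric.mem_closure_iff.1 hxc (ε/2) (by linarith) with ⟨p, ⟨hpC, hTp⟩, hd⟩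
      have h1 := quasi x hxC p hpC hTp
      have h2 : ‖x - p‖ < ε/2 := by rwa [← dist_eq_norm]
      calc ‖T x - x‖ ≤ ‖T x - p‖ + ‖p - x‖ := norm_sub_le_norm_sub_add_norm_sub (T x) p x
        _ ≤ ‖x - p‖ + ‖p - x‖ := by gcongr
        _ = ‖x - p‖ + ‖x - p‖ := by rw [norm_sub_rev p x]
        _ ≤ 0 + ε := by linarith
    have hz : T x - x = 0 := norm_eq_zero.1 (le_antisymm key (norm_nonneg _))
    exact sub_eq_zero.1 hz
  · intro hSC
    intro p hp q hq t s ht hs hts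
    have hpC := hp.1; have hTp := hp.2
    have hqC := hq.1; have hTq := hq.2
    set z := t • p + s • q with hz
    have hzC : z ∈ C := hconv hpC hqC ht hs hts
    refine ⟨hzC, ?_⟩
    by_cases hpq : p = q
    · have : z = p := by rw [hz, hpq, ← add_smul, hts, one_smul]
      rw [this, hTp]
    have h1 : ‖T z - p‖ ≤ s * ‖q - p‖ := by
      have := quasi z hzC p hpC hTp
      have hzp : z - p = s • (q - p) := by
        have hs' : s = 1 - t := by linarith
        rw [hz, hs']; module
      calc ‖T z - p‖ ≤ ‖z - p‖ := this
        _ = s * ‖q - p‖ := by rw [hzp, norm_smul, Real.norm_of_nonneg hs]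
    have h2 : ‖T z - q‖ ≤ t * ‖p - q‖ := by
      have := quasi z hzC q hqC hTq
      have hzq : z - q = t • (p - q) := by
        have ht' : t = 1 - s := by linarith
        rw [hz, ht']; module
      calc ‖T z - q‖ ≤ ‖z - q‖ := this
        _ = t * ‖p - q‖ := by rw [hzq, norm_smul, Real.norm_of_nonneg ht]
    have hnpq : ‖p - q‖ = ‖q - p‖ := norm_sub_rev p q
    have htri : ‖p - q‖ ≤ ‖p - T z‖ + ‖T z - q‖ := norm_sub_le_norm_sub_add_norm_sub p (T z) q
    have hpt : ‖p - T z‖ = ‖T z - p‖ := norm_sub_rev p (T z)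
    -- equalities
    have heq1 : ‖T z - p‖ = s * ‖q - p‖ := by
      by_contra hne
      have : ‖T z - p‖ < s * ‖q - p‖ := lt_of_le_of_ne h1 hne
      have : ‖p - q‖ < ‖p - q‖ := by
        calc ‖p - q‖ ≤ ‖p - T z‖ + ‖T z - q‖ := htri
          _ < s * ‖q - p‖ + t * ‖p - q‖ := by rw [hpt]; exact add_lt_add_of_lt_of_le this h2
          _ = ‖p - q‖ := by rw [← hnpq]; linear_combination ‖p - q‖ * hts
      exact absurd this (lt_irrefl _)
    have heq2 : ‖T z - q‖ = t * ‖p - q‖ := by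
      by_contra hne
      have : ‖T z - q‖ < t * ‖p - q‖ := lt_of_le_of_ne h2 hne
      have : ‖p - q‖ < ‖p - q‖ := by
        calc ‖p - q‖ ≤ ‖p - T z‖ + ‖T z - q‖ := htri
          _ < s * ‖q - p‖ + t * ‖p - q‖ := by
              rw [hpt]; exact add_lt_add_of_le_of_lt (heq1.le) this
          _ = ‖p - q‖ := by rw [← hnpq]; linear_combination ‖p - q‖ * hts
      exact absurd this (lt_irrefl _)
    have hadd : ‖(p - T z) + (T z - q)‖ = ‖p - T z‖ + ‖T z - q‖ := by
      rw [sub_add_sub_cancel, hpt, heq1, heq2, ← hnpq]; linear_combination -‖p - q‖ * hts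
    have hsr : SameRay ℝ (p - T z) (T z - q) := (sameRay_iff_norm_add).2 hadd
    have hkey : ‖p - T z‖ • (T z - q) = ‖T z - q‖ • (p - T z) := hsr.norm_smul_eq
    rw [hpt, heq1, heq2] at hkey
    have hpqn : (0:ℝ) < ‖p - q‖ := by
      rw [norm_pos_iff]; exact sub_ne_zero.2 hpq
    -- (s‖q-p‖)•(Tz - q) = (t‖p-q‖)•(p - Tz)
    rw [← hnpq] at hkey
    have hkey2 : s • (T z - q) = t • (p - T z) := by
      rw [mul_comm s, mul_comm t, mul_smul, mul_smul] at hkey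
      exact smul_right_injective X (ne_of_gt hpqn) hkey
    have hTz : T z = z := by
      rw [hz]
      linear_combination (norm := module) hkey2 - hts • T z
    rw [hTz, hz]
end
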